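/- There exists a universal constant C such that for every d ≥ 1 and every subset A ⊆ K, the noise sparsifier H for G_d satisfies h'(A) ≤ C · h_K(A), where h' is the cut function of H and h_K is the terminal cut function of G_d. -/

import Mathlib

open Finset

/-- Vertices of the `d`-dimensional Boolean hypercube. -/
abbrev Cube (d : ℕ) := Fin d → Bool

/-- Hamming distance between two Boolean strings. -/
def hamm {d : ℕ} (s t : Cube d) : ℕ := (Finset.univ.filter fun i => s i ≠ t i).card

/-- The vertex set of the graph `G_d`: `Sum.inl s` is the hypercube vertex `y_s`,
`Sum.inr s` is the terminal `z_s`. -/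
abbrev Vtx (d : ℕ) := Cube d ⊕ Cube d

/-- Edge capacities of the graph `G_d`: hypercube edges (Hamming distance `1`) have
capacity `1`, each terminal `z_s` is attached to `y_s` by an edge of capacity `√d`. -/
noncomputable def gCap (d : ℕ) : Vtx d → Vtx d → ℝ
  | Sum.inl s, Sum.inl t => if hamm s t = 1 then 1 else 0
  | Sum.inl s, Sum.inr t => if s = t then Real.sqrt d else 0
  | Sum.inr s, Sum.inl t => if s = t then Real.sqrt d else 0
  | Sum.inr _, Sum.inr _ => 0

/-- The cut function of a capacitated graph: total capacity of edges crossing `A`.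
(Each unordered crossing edge `{u,v}` with `u ∈ A`, `v ∉ A` is counted once.) -/
noncomputable def cutFun {V : Type*} [Fintype V] [DecidableEq V]
    (c : V → V → ℝ) (A : Finset V) : ℝ :=
  ∑ u ∈ A, ∑ v ∈ Aᶜ, c u v

/-- The terminal set `K = {z_s}` of `G_d`. -/
def Kset (d : ℕ) : Finset (Vtx d) := Finset.univ.image Sum.inr

/-- The terminal cut function: `h_K(U) = min { h(A) : A ∩ K = U }`. -/
noncomputable def termCut {V : Type*} [Fintype V] [DecidableEq V]
    (c : V → V → ℝ) (K U : Finset V) : ℝ :=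
  sInf {x : ℝ | ∃ A : Finset V, A ∩ K = U ∧ cutFun c A = x}

/-- The terminal cut function of `G_d`, for a set `A` of terminals (identified with
Boolean strings). -/
noncomputable def hK (d : ℕ) (A : Finset (Cube d)) : ℝ :=
  termCut (gCap d) (Kset d) (A.image Sum.inr)

/-- The flip probability `p = (1 - ρ)/2` where `ρ = 1 - 1/√d`. -/
noncomputable def noiseP (d : ℕ) : ℝ := (1 - (1 - 1 / Real.sqrt d)) / 2

/-- Capacities of the noise sparsifier `H`:
`c_H(z_s, z_t) = √d · p^{Hamm(s,t)} · (1-p)^{d - Hamm(s,t)}` for `s ≠ t`. -/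
noncomputable def noiseCap (d : ℕ) (s t : Cube d) : ℝ :=
  if s = t then 0
  else Real.sqrt d * noiseP d ^ hamm s t * (1 - noiseP d) ^ (d - hamm s t)

/-!
Take `C = 1`. Let `B` be a cut of `G_d` with terminal side `A` and hypercube side `S`, so that
`h(B) = |∂S| + √d (|S \ A| + |A \ S|)`. Write `h'(A) = √d · K(A, Aᶜ)` with `K` the kernel of
`p`-noise on the cube, `p = 1/(2√d)`. Since `K` is doubly stochastic, replacing `A` by `S` changes
`K(A, Aᶜ)` by at most `|A Δ S|`. To bound `K(S, Sᶜ)`, split the noise into its random flip set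
`F` and walk from `s` to `s + F` one flip at a time: summed over `s`, the step in direction `j`
costs the number of `j`-edges leaving `S`, and `j ∈ F` with probability `p`, so
`K(S, Sᶜ) ≤ p |∂S|`. Hence `h'(A) ≤ |∂S| / 2 + √d |A Δ S| ≤ h(B)`.
-/

section CutFunction

variable {V : Type*} [Fintype V] [DecidableEq V]

lemma cutFun_eq_sum_ite (c : V → V → ℝ) (A : Finset V) :
    cutFun c A = ∑ u, ∑ v, if u ∈ A ∧ v ∉ A then c u v else 0 := by
  simp_rw [cutFun, ite_and, ← mem_compl, ← ite_sum_zero, sum_ite_mem, univ_inter]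

lemma cutFun_nonneg {c : V → V → ℝ} (hc : ∀ u v, 0 ≤ c u v) (A : Finset V) :
    0 ≤ cutFun c A :=
  sum_nonneg fun u _ => sum_nonneg fun v _ => hc u v

lemma cutFun_compl {c : V → V → ℝ} (hc : ∀ u v, c u v = c v u) (S : Finset V) :
    cutFun c Sᶜ = cutFun c S := by
  rw [cutFun, compl_compl, sum_comm, cutFun]
  simp only [hc]

lemma sum_mul_abs_indicator_sub (c : V → V → ℝ) (S : Finset V) :
    ∑ u, ∑ v, c u v * |(if v ∈ S then 1 else 0) - (if u ∈ S then 1 else 0)|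
      = cutFun c S + cutFun c Sᶜ := by
  simp_rw [cutFun_eq_sum_ite, ← sum_add_distrib]
  refine sum_congr rfl fun u _ => sum_congr rfl fun v _ => ?_
  by_cases hu : u ∈ S <;> by_cases hv : v ∈ S <;> simp [hu, hv]

lemma cutFun_le_cutFun_add_card_sdiff {c : V → V → ℝ} (hc : ∀ u v, 0 ≤ c u v)
    (hrow : ∀ u, ∑ v, c u v = 1) (hcol : ∀ v, ∑ u, c u v = 1) (A S : Finset V) :
    cutFun c A ≤ cutFun c S + #(A \ S) + #(S \ A) := by
  have hAS : (#(A \ S) : ℝ) = ∑ u, ∑ v, if u ∈ A \ S then c u v else 0 := by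
    simp_rw [← ite_sum_zero, sum_ite_mem, univ_inter, hrow, sum_const, nsmul_one]
  have hSA : (#(S \ A) : ℝ) = ∑ u, ∑ v, if v ∈ S \ A then c u v else 0 := by
    rw [sum_comm]
    simp_rw [← ite_sum_zero, sum_ite_mem, univ_inter, hcol, sum_const, nsmul_one]
  simp_rw [hAS, hSA, cutFun_eq_sum_ite, ← sum_add_distrib]
  refine sum_le_sum fun u _ => sum_le_sum fun v _ => ?_
  have := hc u v
  by_cases hu : u ∈ A <;> by_cases hv : v ∈ A <;> by_cases hu' : u ∈ S <;> by_cases hv' : v ∈ S <;>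
    simp [hu, hv, hu', hv'] <;> linarith

end CutFunction

lemma sum_abs_comp_comp_sub_le {α : Type*} [Fintype α] (f : α → ℝ) (σ : α → α) (τ : α ≃ α) :
    ∑ x, |f (σ (τ x)) - f x| ≤ ∑ x, |f (σ x) - f x| + ∑ x, |f (τ x) - f x| := by
  rw [← τ.sum_comp (fun y => |f (σ y) - f y|), ← sum_add_distrib]
  exact sum_le_sum fun x _ => abs_sub_le _ _ _

section Flips

variable {d : ℕ}

def flipAt (F : Finset (Fin d)) (s : Cube d) : Cube d := fun i => if i ∈ F then !s i else s i

lemma flipAt_flipAt (F : Finset (Fin d)) (s : Cube d) : flipAt F (flipAt F s) = s := by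
  funext i
  by_cases hi : i ∈ F <;> simp [flipAt, hi]

@[simp]
lemma flipAt_empty (s : Cube d) : flipAt ∅ s = s := by
  funext i
  simp [flipAt]

lemma flipAt_insert {j : Fin d} {F : Finset (Fin d)} (hj : j ∉ F) (s : Cube d) :
    flipAt (insert j F) s = flipAt {j} (flipAt F s) := by
  funext i
  by_cases hi : i = j
  · subst hi; simp [flipAt, hj]
  · simp [flipAt, hi]

lemma filter_ne_flipAt (F : Finset (Fin d)) (s : Cube d) :
    univ.filter (fun i => s i ≠ flipAt F s i) = F := by
  ext i
  by_cases hi : i ∈ F <;> simp [flipAt, hi]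

lemma hamm_flipAt (F : Finset (Fin d)) (s : Cube d) : hamm s (flipAt F s) = #F :=
  congrArg card (filter_ne_flipAt F s)

lemma hamm_comm (s t : Cube d) : hamm s t = hamm t s := by
  simp only [hamm, ne_comm]

def flipAtEquiv (s : Cube d) : Finset (Fin d) ≃ Cube d where
  toFun F := flipAt F s
  invFun t := univ.filter fun i => s i ≠ t i
  left_inv F := filter_ne_flipAt F s
  right_inv t := by
    funext i
    cases hs : s i <;> cases ht : t i <;> simp [flipAt, hs, ht]

lemma sum_abs_flipAt_sub_le (f : Cube d → ℝ) (F : Finset (Fin d)) :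
    ∑ s, |f (flipAt F s) - f s| ≤ ∑ j ∈ F, ∑ s, |f (flipAt {j} s) - f s| := by
  induction F using Finset.induction_on with
  | empty => simp
  | insert j F hj ih =>
    simp_rw [flipAt_insert hj, sum_insert hj]
    calc ∑ s, |f (flipAt {j} (flipAt F s)) - f s|
        ≤ ∑ s, |f (flipAt {j} s) - f s| + ∑ s, |f (flipAt F s) - f s| :=
          sum_abs_comp_comp_sub_le f (flipAt {j}) (Function.Involutive.toPerm _ (flipAt_flipAt F))
      _ ≤ _ := by gcongr

end Flips

section NoiseKernel

variable {d : ℕ}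

noncomputable def noiseKernel (p : ℝ) (s t : Cube d) : ℝ := p ^ hamm s t * (1 - p) ^ (d - hamm s t)

lemma noiseKernel_comm (p : ℝ) (s t : Cube d) : noiseKernel p s t = noiseKernel p t s := by
  rw [noiseKernel, noiseKernel, hamm_comm]

lemma noiseKernel_nonneg {p : ℝ} (hp0 : 0 ≤ p) (hp1 : p ≤ 1) (s t : Cube d) :
    0 ≤ noiseKernel p s t :=
  mul_nonneg (pow_nonneg hp0 _) (pow_nonneg (sub_nonneg.2 hp1) _)

lemma sum_noiseKernel_eq_sum_flipAt (p : ℝ) (s : Cube d) (g : Cube d → ℝ) :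
    ∑ t, noiseKernel p s t * g t = ∑ F, p ^ #F * (1 - p) ^ (d - #F) * g (flipAt F s) := by
  rw [← (flipAtEquiv s).sum_comp]
  simp [flipAtEquiv, noiseKernel, hamm_flipAt]

lemma sum_noiseKernel (p : ℝ) (s : Cube d) : ∑ t, noiseKernel p s t = 1 := by
  have := sum_pow_mul_eq_add_pow p (1 - p) (univ : Finset (Fin d))
  simp only [powerset_univ, card_univ, Fintype.card_fin, add_sub_cancel, one_pow] at this
  simpa [this] using sum_noiseKernel_eq_sum_flipAt p s 1

lemma sum_filter_mem_binomial (p : ℝ) (j : Fin d) :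
    ∑ F with j ∈ F, p ^ #F * (1 - p) ^ (d - #F) = p := by
  have hj : ∀ t ∈ (univ.erase j).powerset, j ∉ t :=
    fun t ht h => notMem_erase j univ (mem_powerset.1 ht h)
  rw [sum_filter, ← powerset_univ, ← insert_erase (mem_univ j),
    sum_powerset_insert (notMem_erase j univ), sum_eq_zero fun t ht => if_neg (hj t ht), zero_add]
  have binomial := sum_pow_mul_eq_add_pow p (1 - p) (univ.erase j)
  rw [add_sub_cancel, one_pow, card_erase_of_mem (mem_univ j), card_univ, Fintype.card_fin]
    at binomial
  conv_rhs => rw [← mul_one p, ← binomial, mul_sum]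
  refine sum_congr rfl fun t ht => ?_
  rw [if_pos (mem_insert_self j t), card_insert_of_notMem (hj t ht),
    show d - (#t + 1) = d - 1 - #t by omega]
  ring

lemma sum_noiseKernel_mul_abs_sub_le {p : ℝ} (hp0 : 0 ≤ p) (hp1 : p ≤ 1) (f : Cube d → ℝ) :
    ∑ s, ∑ t, noiseKernel p s t * |f t - f s| ≤ p * ∑ j, ∑ s, |f (flipAt {j} s) - f s| := by
  set μ : Finset (Fin d) → ℝ := fun F => p ^ #F * (1 - p) ^ (d - #F)
  have hμ : ∀ F, 0 ≤ μ F := fun F =>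
    mul_nonneg (pow_nonneg hp0 _) (pow_nonneg (sub_nonneg.2 hp1) _)
  calc ∑ s, ∑ t, noiseKernel p s t * |f t - f s|
      = ∑ F, μ F * ∑ s, |f (flipAt F s) - f s| := by
        simp_rw [sum_noiseKernel_eq_sum_flipAt p _ (fun t => |f t - f _|), mul_sum]
        exact sum_comm
    _ ≤ ∑ F, μ F * ∑ j ∈ F, ∑ s, |f (flipAt {j} s) - f s| :=
        sum_le_sum fun F _ => mul_le_mul_of_nonneg_left (sum_abs_flipAt_sub_le f F) (hμ F)
    _ = ∑ j, (∑ F with j ∈ F, μ F) * ∑ s, |f (flipAt {j} s) - f s| := by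
        simp_rw [sum_mul, mul_sum]
        exact sum_comm' fun F j => by simp
    _ = p * ∑ j, ∑ s, |f (flipAt {j} s) - f s| := by
        simp_rw [μ, sum_filter_mem_binomial, mul_sum]

end NoiseKernel

section Hypercube

variable {d : ℕ}

def cubeCap (s t : Cube d) : ℝ := if hamm s t = 1 then 1 else 0

lemma cubeCap_comm (s t : Cube d) : cubeCap s t = cubeCap t s := by
  rw [cubeCap, cubeCap, hamm_comm]

lemma sum_cubeCap_mul (s : Cube d) (g : Cube d → ℝ) :
    ∑ t, cubeCap s t * g t = ∑ j, g (flipAt {j} s) := by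
  rw [← (flipAtEquiv s).sum_comp]
  simp only [flipAtEquiv, Equiv.coe_fn_mk, cubeCap, hamm_flipAt, ite_mul, one_mul, zero_mul]
  rw [← sum_filter, ← powerset_univ, ← powersetCard_eq_filter, powersetCard_one, sum_map]
  rfl

lemma cutFun_noiseKernel_le {p : ℝ} (hp0 : 0 ≤ p) (hp1 : p ≤ 1) (S : Finset (Cube d)) :
    cutFun (noiseKernel p) S ≤ p * cutFun cubeCap S := by
  set f : Cube d → ℝ := fun s => if s ∈ S then 1 else 0
  have noise := sum_noiseKernel_mul_abs_sub_le hp0 hp1 f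
  have edges : ∑ j, ∑ s, |f (flipAt {j} s) - f s| = 2 * cutFun cubeCap S := by
    rw [sum_comm, sum_congr rfl fun s _ => (sum_cubeCap_mul s fun t => |f t - f s|).symm,
      sum_mul_abs_indicator_sub, cutFun_compl cubeCap_comm]
    ring
  rw [sum_mul_abs_indicator_sub, cutFun_compl (noiseKernel_comm p), edges] at noise
  linarith

end Hypercube

lemma compl_disjSum {α β : Type*} [Fintype α] [Fintype β] [DecidableEq α] [DecidableEq β]
    (s : Finset α) (t : Finset β) :
    (s.disjSum t)ᶜ = sᶜ.disjSum tᶜ := by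
  ext (x | x) <;> simp

section Gd

variable {d : ℕ}

lemma cutFun_gCap_disjSum (S A : Finset (Cube d)) :
    cutFun (gCap d) (S.disjSum A) = cutFun cubeCap S + √d * (#(S \ A) + #(A \ S)) := by
  simp only [cutFun, compl_disjSum, sum_disjSum, gCap, sum_const_zero, add_zero, sum_add_distrib]
  rw [add_assoc]
  congr 1
  simp only [sum_ite_eq, mem_compl, ← sum_filter, ← sdiff_eq_filter, sum_const, nsmul_eq_mul]
  ring

lemma cutFun_noiseCap (A : Finset (Cube d)) :
    cutFun (noiseCap d) A = √d * cutFun (noiseKernel (noiseP d)) A := by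
  rw [cutFun, cutFun, mul_sum]
  refine sum_congr rfl fun s hs => ?_
  rw [mul_sum]
  refine sum_congr rfl fun t ht => ?_
  rw [noiseCap, if_neg (ne_of_mem_of_not_mem hs (mem_compl.1 ht)), noiseKernel]
  ring

lemma sqrt_mul_noiseP (hd : 1 ≤ d) : √d * noiseP d = 1 / 2 := by
  have : √(d : ℝ) ≠ 0 := by positivity
  unfold noiseP
  field_simp
  ring

lemma noiseP_mem_Icc (hd : 1 ≤ d) : noiseP d ∈ Set.Icc 0 1 := by
  have hsqrt : 1 ≤ √(d : ℝ) := Real.one_le_sqrt.2 (by exact_mod_cast hd)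
  have := sqrt_mul_noiseP hd
  constructor <;> nlinarith

lemma cutFun_noiseCap_le_cutFun_gCap (hd : 1 ≤ d) (S A : Finset (Cube d)) :
    cutFun (noiseCap d) A ≤ cutFun (gCap d) (S.disjSum A) := by
  obtain ⟨hp0, hp1⟩ := noiseP_mem_Icc hd
  have split := cutFun_le_cutFun_add_card_sdiff (noiseKernel_nonneg hp0 hp1) (sum_noiseKernel _)
    (fun t => by simpa only [noiseKernel_comm] using sum_noiseKernel _ t) A S
  have iso := cutFun_noiseKernel_le hp0 hp1 S
  have edges : 0 ≤ cutFun cubeCap S :=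
    cutFun_nonneg (fun s t => by unfold cubeCap; split_ifs <;> norm_num) S
  rw [cutFun_noiseCap, cutFun_gCap_disjSum]
  calc √d * cutFun (noiseKernel (noiseP d)) A
      ≤ √d * (noiseP d * cutFun cubeCap S + #(A \ S) + #(S \ A)) := by gcongr; linarith
    _ = √d * noiseP d * cutFun cubeCap S + √d * (#(S \ A) + #(A \ S)) := by ring
    _ ≤ cutFun cubeCap S + √d * (#(S \ A) + #(A \ S)) := by
        rw [sqrt_mul_noiseP hd]; linarith

end Gd

/-- There is a universal constant `C` such that for all `d ≥ 1` and all
subsets `A` of terminals, the cut of the noise sparsifier is at most `C` times the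
corresponding terminal min-cut of `G_d`. -/
theorem noise_sparsifier_cuts_upper_bound :
    ∃ C : ℝ, ∀ d : ℕ, 1 ≤ d → ∀ A : Finset (Cube d),
      cutFun (noiseCap d) A ≤ C * hK d A := by
  refine ⟨1, fun d hd A => ?_⟩
  rw [one_mul, hK, termCut]
  refine le_csInf ⟨_, (∅ : Finset (Cube d)).disjSum A, ?_, rfl⟩ ?_
  · ext (x | x) <;> simp [Kset]
  · rintro _ ⟨B, hB, rfl⟩
    have hA : B.toRight = A := by
      ext s
      simpa [Kset] using Finset.ext_iff.1 hB (Sum.inr s)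
    rw [← toLeft_disjSum_toRight (u := B), hA]
    exact cutFun_noiseCap_le_cutFun_gCap hd _ A
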